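/- arXiv:2007.08654 — 2 statements merged into one kernel-verified Lean document; each statement's English description precedes it below -/
import Mathlib

section
/- Let n ≥ 1, 0 ≤ α < π/2, and let A ∈ Mₙ(ℂ) satisfy A ∈ S_α. Then cos(α)³·w(A)⁻¹ ≤ w(A⁻¹). -/
open Matrix MeasureTheory
open scoped ComplexOrder

attribute [local instance] Matrix.normedAddCommGroup Matrix.normedSpace

/-- The numerical radius of a complex `n × n` matrix. -/
noncomputable def nradius {n : ℕ} (A : Matrix (Fin n) (Fin n) ℂ) : ℝ :=
  sSup {r : ℝ | ∃ x : EuclideanSpace ℂ (Fin n), ‖x‖ = 1 ∧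
    r = ‖(inner ℂ x (Matrix.toEuclideanCLM (𝕜 := ℂ) A x) : ℂ)‖}

/-- The operator (spectral) norm of a complex `n × n` matrix. -/
noncomputable def opNorm {n : ℕ} (A : Matrix (Fin n) (Fin n) ℂ) : ℝ :=
  ‖(Matrix.toEuclideanCLM (𝕜 := ℂ) A :
      EuclideanSpace ℂ (Fin n) →L[ℂ] EuclideanSpace ℂ (Fin n))‖

/-- The real part `(A + Aᴴ)/2` of a matrix. -/
noncomputable def matRe {n : ℕ} (A : Matrix (Fin n) (Fin n) ℂ) : Matrix (Fin n) (Fin n) ℂ :=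
  (1 / 2 : ℂ) • (A + Aᴴ)

/-- `A ∈ S_α` : `Re A` is positive definite and the numerical range of `A` lies in the
sector `{z : |Im z| ≤ tan α · Re z}`. -/
def InSector {n : ℕ} (α : ℝ) (A : Matrix (Fin n) (Fin n) ℂ) : Prop :=
  (matRe A).PosDef ∧ ∀ x : EuclideanSpace ℂ (Fin n), ‖x‖ = 1 →
    |(inner ℂ x (Matrix.toEuclideanCLM (𝕜 := ℂ) A x) : ℂ).im| ≤
      Real.tan α * ((inner ℂ x (Matrix.toEuclideanCLM (𝕜 := ℂ) A x) : ℂ)).re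

/-!
Write `Re A = R²` with `R = (Re A)^{1/2}` invertible, so that `A = R (1 + i S) R` with
`S = R⁻¹ (Im A) R⁻¹` self-adjoint. The sector condition says exactly that the numerical range of
`S` lies in `[-tan α, tan α]`, so `‖S‖ ≤ tan α` and
`‖A x‖² ≤ ‖R‖² (1 + tan² α) ‖R x‖² = sec² α ‖Re A‖ Re⟨A x, x⟩ ≤ sec² α w(A) Re⟨A x, x⟩`.
Testing `w(A⁻¹)` on the vector `A x` gives `Re⟨A x, x⟩ ≤ |⟨A⁻¹ (A x), A x⟩| ≤ w(A⁻¹) ‖A x‖²`,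
hence `cos² α ≤ w(A) w(A⁻¹)`, which is stronger than the claim.
-/

open scoped ComplexStarModule InnerProductSpace

section InnerProductSpace

variable {𝕜 E : Type*} [RCLike 𝕜] [NormedAddCommGroup E] [InnerProductSpace 𝕜 E] [CompleteSpace E]

lemma IsSelfAdjoint.norm_le_of_norm_inner_apply_le {S : E →L[𝕜] E} (hS : IsSelfAdjoint S)
    {c : ℝ} (hc : 0 ≤ c) (h : ∀ x, ‖⟪x, S x⟫_𝕜‖ ≤ c * ‖x‖ ^ 2) : ‖S‖ ≤ c := by
  rw [S.norm_eq_iSup_rayleighQuotient hS.isSymmetric]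
  refine ciSup_le fun x ↦ ?_
  rcases eq_or_ne x 0 with rfl | hx
  · simpa using hc
  have hx2 : 0 < ‖x‖ ^ 2 := by positivity
  rw [ContinuousLinearMap.rayleighQuotient, abs_div, abs_sq, div_le_iff₀ hx2,
    ContinuousLinearMap.reApplyInnerSelf_apply, ← inner_conj_symm, RCLike.conj_re]
  exact (RCLike.abs_re_le_norm _).trans (h x)

end InnerProductSpace

section Complex

variable {E : Type*} [NormedAddCommGroup E] [InnerProductSpace ℂ E]

lemma inner_apply_self_eq_norm_sq_mul (T : E →L[ℂ] E) (x : E) :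
    ⟪x, T x⟫_ℂ = ((‖x‖ ^ 2 : ℝ) : ℂ) * ⟪(‖x‖⁻¹ : ℂ) • x, T ((‖x‖⁻¹ : ℂ) • x)⟫_ℂ := by
  rcases eq_or_ne x 0 with rfl | hx
  · simp
  have : (‖x‖ : ℂ) ≠ 0 := by exact_mod_cast norm_ne_zero_iff.mpr hx
  rw [map_smul, inner_smul_left, inner_smul_right, map_inv₀, Complex.conj_ofReal]
  push_cast
  field_simp

variable [CompleteSpace E]

lemma IsSelfAdjoint.norm_add_I_smul_apply_sq {S : E →L[ℂ] E} (hS : IsSelfAdjoint S) (u : E) :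
    ‖u + Complex.I • S u‖ ^ 2 = ‖u‖ ^ 2 + ‖S u‖ ^ 2 := by
  have hreal : (⟪u, S u⟫_ℂ).im = 0 := by
    rw [← Complex.conj_eq_iff_im, inner_conj_symm, ← ContinuousLinearMap.adjoint_inner_right,
      ← ContinuousLinearMap.star_eq_adjoint, hS.star_eq]
  rw [@norm_add_sq ℂ, inner_smul_right, norm_smul, Complex.norm_I, one_mul]
  simp [hreal]

lemma inner_star_apply (T : E →L[ℂ] E) (x : E) :
    ⟪x, (star T) x⟫_ℂ = starRingEnd ℂ ⟪x, T x⟫_ℂ := by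
  rw [ContinuousLinearMap.star_eq_adjoint, ContinuousLinearMap.adjoint_inner_right,
      inner_conj_symm]

lemma inner_realPart_apply (T : E →L[ℂ] E) (x : E) :
    ⟪x, (ℜ T : E →L[ℂ] E) x⟫_ℂ = (⟪x, T x⟫_ℂ).re := by
  simp only [realPart_apply_coe, FunLike.coe_smul, FunLike.coe_add,
    Pi.add_apply, Pi.smul_apply, inner_add_right, inner_smul_right_eq_smul, inner_star_apply]
  rw [Complex.add_conj, Complex.real_smul]
  push_cast; ring

lemma inner_imaginaryPart_apply (T : E →L[ℂ] E) (x : E) :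
    ⟪x, (ℑ T : E →L[ℂ] E) x⟫_ℂ = (⟪x, T x⟫_ℂ).im := by
  simp only [imaginaryPart_apply_coe, FunLike.coe_smul, FunLike.coe_sub,
    Pi.sub_apply, Pi.smul_apply, inner_sub_right, inner_smul_right, inner_smul_right_eq_smul,
    inner_star_apply]
  rw [Complex.sub_conj, Complex.real_smul]
  push_cast; ring_nf; simp

lemma norm_mul_one_add_I_smul_mul_apply_sq_le (R : E →L[ℂ] E) {S : E →L[ℂ] E}
    (hS : IsSelfAdjoint S) {t : ℝ} (hSt : ‖S‖ ≤ t) (x : E) :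
    ‖(R * (1 + Complex.I • S) * R) x‖ ^ 2 ≤ (1 + t ^ 2) * ‖R‖ ^ 2 * ‖R x‖ ^ 2 := by
  set u := R x
  have hSu : ‖S u‖ ^ 2 ≤ t ^ 2 * ‖u‖ ^ 2 := by
    rw [← mul_pow]
    exact pow_le_pow_left₀ (norm_nonneg _) (S.le_of_opNorm_le hSt u) 2
  calc ‖(R * (1 + Complex.I • S) * R) x‖ ^ 2 = ‖R (u + Complex.I • S u)‖ ^ 2 := by simp [u]
    _ ≤ ‖R‖ ^ 2 * ‖u + Complex.I • S u‖ ^ 2 := by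
      rw [← mul_pow]
      exact pow_le_pow_left₀ (norm_nonneg _) (R.le_opNorm _) 2
    _ = ‖R‖ ^ 2 * (‖u‖ ^ 2 + ‖S u‖ ^ 2) := by rw [hS.norm_add_I_smul_apply_sq]
    _ ≤ (1 + t ^ 2) * ‖R‖ ^ 2 * ‖u‖ ^ 2 := by nlinarith [sq_nonneg ‖R‖]

lemma norm_cfcSqrt_realPart_apply_sq {T : E →L[ℂ] E} (hT : 0 ≤ (ℜ T : E →L[ℂ] E)) (x : E) :
    ‖CFC.sqrt (ℜ T : E →L[ℂ] E) x‖ ^ 2 = (⟪x, T x⟫_ℂ).re := by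
  rw [ContinuousLinearMap.apply_norm_sq_eq_inner_adjoint_right,
    ← ContinuousLinearMap.star_eq_adjoint, (CFC.sqrt_nonneg _).isSelfAdjoint.star_eq,
    ← ContinuousLinearMap.mul_def, CFC.sqrt_mul_sqrt_self _ hT, inner_realPart_apply]
  rfl

lemma re_inner_apply_pos_of_isStrictlyPositive_realPart {T : E →L[ℂ] E}
    (hT : IsStrictlyPositive (ℜ T : E →L[ℂ] E)) {x : E} (hx : x ≠ 0) : 0 < (⟪x, T x⟫_ℂ).re := by
  obtain ⟨R, hR⟩ := IsStrictlyPositive.isUnit_cfcSqrt _ hT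
  have hRx : CFC.sqrt (ℜ T : E →L[ℂ] E) x ≠ 0 := fun h ↦ hx <| by
    rw [← one_apply_eq_self (F := E →L[ℂ] E) x, ← R.inv_mul, mul_apply_eq_comp, hR, h, map_zero]
  rw [← norm_cfcSqrt_realPart_apply_sq hT.nonneg]
  positivity

lemma norm_apply_sq_le_of_abs_im_inner_le {T : E →L[ℂ] E}
    (hT : IsStrictlyPositive (ℜ T : E →L[ℂ] E)) {t : ℝ} (ht : 0 ≤ t)
    (hsec : ∀ x, |(⟪x, T x⟫_ℂ).im| ≤ t * (⟪x, T x⟫_ℂ).re) (x : E) :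
    ‖T x‖ ^ 2 ≤ (1 + t ^ 2) * ‖(ℜ T : E →L[ℂ] E)‖ * (⟪x, T x⟫_ℂ).re := by
  set H := (ℜ T : E →L[ℂ] E)
  set K := (ℑ T : E →L[ℂ] E)
  set R := CFC.sqrt H
  have hR : IsSelfAdjoint R := (CFC.sqrt_nonneg H).isSelfAdjoint
  have hRR : R * R = H := CFC.sqrt_mul_sqrt_self H hT.nonneg
  have hRunit : IsUnit R := IsStrictlyPositive.isUnit_cfcSqrt H hT
  have hnormR := norm_cfcSqrt_realPart_apply_sq hT.nonneg
  set S := Ring.inverse R * K * Ring.inverse R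
  have hS : IsSelfAdjoint S := (ℑ T).2.conjugate_self hR.ringInverse
  have hT_eq : T = R * (1 + Complex.I • S) * R := by
    conv_lhs => rw [← realPart_add_I_smul_imaginaryPart T]
    simp only [S, mul_add, add_mul, mul_one, mul_smul_comm, smul_mul_assoc, hRR, ← mul_assoc,
      Ring.mul_inverse_cancel R hRunit, one_mul]
    simp only [mul_assoc, Ring.inverse_mul_cancel R hRunit, mul_one]
    rfl
  have hSt : ‖S‖ ≤ t := by
    refine hS.norm_le_of_norm_inner_apply_le ht fun u ↦ ?_
    obtain ⟨z, rfl⟩ : ∃ z, R z = u := ⟨Ring.inverse R u, by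
      rw [← mul_apply_eq_comp, Ring.mul_inverse_cancel R hRunit, one_apply_eq_self]⟩
    have hRinvR : Ring.inverse R (R z) = z := by
      rw [← mul_apply_eq_comp, Ring.inverse_mul_cancel R hRunit, one_apply_eq_self]
    have : ⟪R z, S (R z)⟫_ℂ = (⟪z, T z⟫_ℂ).im :=
      calc ⟪R z, S (R z)⟫_ℂ = ⟪R z, Ring.inverse R (K z)⟫_ℂ := by
            simp only [S, mul_apply_eq_comp, hRinvR]
        _ = ⟪Ring.inverse R (R z), K z⟫_ℂ := (hR.ringInverse.isSymmetric _ _).symm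
        _ = (⟪z, T z⟫_ℂ).im := by rw [hRinvR, inner_imaginaryPart_apply]
    rw [this, Complex.norm_real, Real.norm_eq_abs, hnormR]
    exact hsec z
  calc ‖T x‖ ^ 2 = ‖(R * (1 + Complex.I • S) * R) x‖ ^ 2 := by rw [← hT_eq]
    _ ≤ (1 + t ^ 2) * ‖R‖ ^ 2 * ‖R x‖ ^ 2 := norm_mul_one_add_I_smul_mul_apply_sq_le R hS hSt x
    _ = (1 + t ^ 2) * ‖H‖ * (⟪x, T x⟫_ℂ).re := by rw [← hR.norm_mul_self, hRR, hnormR]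

end Complex

section Matrix

variable {n : ℕ}

lemma nradius_nonneg (A : Matrix (Fin n) (Fin n) ℂ) : 0 ≤ nradius A :=
  Real.sSup_nonneg (by rintro _ ⟨x, -, rfl⟩; exact norm_nonneg _)

lemma norm_inner_le_nradius (A : Matrix (Fin n) (Fin n) ℂ) {x : EuclideanSpace ℂ (Fin n)}
    (hx : ‖x‖ = 1) : ‖⟪x, toEuclideanCLM (𝕜 := ℂ) A x⟫_ℂ‖ ≤ nradius A := by
  refine le_csSup ⟨‖toEuclideanCLM (𝕜 := ℂ) A‖, ?_⟩ ⟨x, hx, rfl⟩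
  rintro _ ⟨y, hy, rfl⟩
  calc ‖⟪y, toEuclideanCLM (𝕜 := ℂ) A y⟫_ℂ‖ ≤ ‖y‖ * ‖toEuclideanCLM (𝕜 := ℂ) A y‖ :=
        norm_inner_le_norm _ _
    _ ≤ ‖y‖ * (‖toEuclideanCLM (𝕜 := ℂ) A‖ * ‖y‖) := by
        gcongr; exact ContinuousLinearMap.le_opNorm _ _
    _ = ‖toEuclideanCLM (𝕜 := ℂ) A‖ := by rw [hy]; ring

lemma norm_inner_le_nradius_mul_sq (A : Matrix (Fin n) (Fin n) ℂ)
    (x : EuclideanSpace ℂ (Fin n)) :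
    ‖⟪x, toEuclideanCLM (𝕜 := ℂ) A x⟫_ℂ‖ ≤ nradius A * ‖x‖ ^ 2 := by
  rcases eq_or_ne x 0 with rfl | hx
  · simp
  rw [inner_apply_self_eq_norm_sq_mul, norm_mul, Complex.norm_real,
    Real.norm_of_nonneg (by positivity), mul_comm]
  gcongr
  exact norm_inner_le_nradius A (norm_smul_inv_norm hx)

lemma InSector.abs_im_inner_le {α : ℝ} {A : Matrix (Fin n) (Fin n) ℂ} (hA : InSector α A)
    (x : EuclideanSpace ℂ (Fin n)) :
    |(⟪x, toEuclideanCLM (𝕜 := ℂ) A x⟫_ℂ).im| ≤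
      Real.tan α * (⟪x, toEuclideanCLM (𝕜 := ℂ) A x⟫_ℂ).re := by
  rcases eq_or_ne x 0 with rfl | hx
  · simp
  rw [inner_apply_self_eq_norm_sq_mul, Complex.im_ofReal_mul, Complex.re_ofReal_mul, abs_mul,
    abs_of_nonneg (by positivity), mul_left_comm]
  gcongr
  exact hA.2 _ (norm_smul_inv_norm hx)

lemma toEuclideanCLM_matRe (A : Matrix (Fin n) (Fin n) ℂ) :
    toEuclideanCLM (𝕜 := ℂ) (matRe A) = ℜ (toEuclideanCLM (𝕜 := ℂ) A) := by
  rw [← map_realPart, realPart_apply_coe, matRe, star_eq_conjTranspose, one_div,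
    ← Complex.ofReal_ofNat, ← Complex.ofReal_inv, Complex.coe_smul]

lemma InSector.isStrictlyPositive_toEuclideanCLM_matRe {α : ℝ} {A : Matrix (Fin n) (Fin n) ℂ}
    (hA : InSector α A) : IsStrictlyPositive (toEuclideanCLM (𝕜 := ℂ) (matRe A)) := by
  open scoped MatrixOrder in
  have h := hA.1.isStrictlyPositive
  exact ⟨map_nonneg _ h.nonneg, h.isUnit.map _⟩

lemma norm_toEuclideanCLM_matRe_le_nradius (A : Matrix (Fin n) (Fin n) ℂ) :
    ‖toEuclideanCLM (𝕜 := ℂ) (matRe A)‖ ≤ nradius A := by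
  rw [toEuclideanCLM_matRe]
  refine IsSelfAdjoint.norm_le_of_norm_inner_apply_le (by exact (ℜ _).2) (nradius_nonneg A)
    fun x ↦ ?_
  rw [inner_realPart_apply, Complex.norm_real, Real.norm_eq_abs]
  exact (Complex.abs_re_le_norm _).trans (norm_inner_le_nradius_mul_sq A x)

lemma InSector.cos_sq_mul_norm_apply_sq_le {α : ℝ} {A : Matrix (Fin n) (Fin n) ℂ}
    (hA : InSector α A) (hα0 : 0 ≤ α) (hα : α < Real.pi / 2) (x : EuclideanSpace ℂ (Fin n)) :
    Real.cos α ^ 2 * ‖toEuclideanCLM (𝕜 := ℂ) A x‖ ^ 2 ≤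
      nradius A * (⟪x, toEuclideanCLM (𝕜 := ℂ) A x⟫_ℂ).re := by
  have hcos : Real.cos α ≠ 0 := (Real.cos_pos_of_mem_Ioo ⟨by linarith [Real.pi_pos], hα⟩).ne'
  have htan : 0 ≤ Real.tan α := Real.tan_nonneg_of_nonneg_of_le_pi_div_two hα0 hα.le
  have hH := hA.isStrictlyPositive_toEuclideanCLM_matRe
  have hnorm := norm_toEuclideanCLM_matRe_le_nradius A
  rw [toEuclideanCLM_matRe] at hH hnorm
  have hre : 0 ≤ (⟪x, toEuclideanCLM (𝕜 := ℂ) A x⟫_ℂ).re := by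
    rw [← norm_cfcSqrt_realPart_apply_sq hH.nonneg]; positivity
  have hsec := mul_le_mul_of_nonneg_left
    (norm_apply_sq_le_of_abs_im_inner_le hH htan hA.abs_im_inner_le x) (sq_nonneg (Real.cos α))
  have hcos_tan : Real.cos α ^ 2 * (1 + Real.tan α ^ 2) = 1 := by
    rw [← Real.inv_one_add_tan_sq hcos, inv_mul_cancel₀ (by positivity)]
  rw [← mul_assoc, ← mul_assoc, hcos_tan, one_mul] at hsec
  exact hsec.trans (by gcongr)

lemma InSector.re_inner_pos {α : ℝ} {A : Matrix (Fin n) (Fin n) ℂ} (hA : InSector α A)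
    {x : EuclideanSpace ℂ (Fin n)} (hx : x ≠ 0) :
    0 < (⟪x, toEuclideanCLM (𝕜 := ℂ) A x⟫_ℂ).re :=
  re_inner_apply_pos_of_isStrictlyPositive_realPart
    (toEuclideanCLM_matRe A ▸ hA.isStrictlyPositive_toEuclideanCLM_matRe) hx

lemma InSector.isUnit_det {α : ℝ} {A : Matrix (Fin n) (Fin n) ℂ} (hA : InSector α A) :
    IsUnit A.det := by
  rw [isUnit_iff_ne_zero]
  intro h
  obtain ⟨v, hv, hAv⟩ := exists_mulVec_eq_zero_iff.mpr h
  have hpos := hA.re_inner_pos (x := WithLp.toLp 2 v) (by simpa using hv)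
  rw [toEuclideanCLM_toLp, hAv] at hpos
  simp at hpos

lemma norm_inner_le_nradius_inv_mul_sq {A : Matrix (Fin n) (Fin n) ℂ} (hA : IsUnit A.det)
    (x : EuclideanSpace ℂ (Fin n)) :
    ‖⟪x, toEuclideanCLM (𝕜 := ℂ) A x⟫_ℂ‖ ≤ nradius A⁻¹ * ‖toEuclideanCLM (𝕜 := ℂ) A x‖ ^ 2 := by
  have hinv : toEuclideanCLM (𝕜 := ℂ) A⁻¹ (toEuclideanCLM (𝕜 := ℂ) A x) = x := by
    rw [← mul_apply_eq_comp, ← map_mul, nonsing_inv_mul _ hA, map_one, one_apply_eq_self]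
  have h := norm_inner_le_nradius_mul_sq A⁻¹ (toEuclideanCLM (𝕜 := ℂ) A x)
  rwa [hinv, ← inner_conj_symm, RCLike.norm_conj] at h

end Matrix

theorem stmt4 {n : ℕ} (hn : 1 ≤ n) {α : ℝ} (hα0 : 0 ≤ α) (hα : α < Real.pi / 2)
    {A : Matrix (Fin n) (Fin n) ℂ} (hA : InSector α A) :
    Real.cos α ^ 3 * (nradius A)⁻¹ ≤ nradius A⁻¹ := by
  set T := toEuclideanCLM (𝕜 := ℂ) A
  have : Nonempty (Fin n) := ⟨⟨0, hn⟩⟩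
  obtain ⟨x, hx⟩ := exists_ne (0 : EuclideanSpace ℂ (Fin n))
  have hρ : 0 < (⟪x, T x⟫_ℂ).re := hA.re_inner_pos hx
  have hAx : Real.cos α ^ 2 * ‖T x‖ ^ 2 ≤ nradius A * (⟪x, T x⟫_ℂ).re :=
    hA.cos_sq_mul_norm_apply_sq_le hα0 hα x
  have hA'x : (⟪x, T x⟫_ℂ).re ≤ nradius A⁻¹ * ‖T x‖ ^ 2 :=
    (Complex.re_le_norm _).trans (norm_inner_le_nradius_inv_mul_sq hA.isUnit_det x)
  have hw : 0 < nradius A := pos_of_mul_pos_left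
    (hρ.trans_le ((Complex.re_le_norm _).trans (norm_inner_le_nradius_mul_sq A x))) (sq_nonneg _)
  have hcos : 0 < Real.cos α := Real.cos_pos_of_mem_Ioo ⟨by linarith [Real.pi_pos], hα⟩
  have hcos_sq : Real.cos α ^ 2 ≤ nradius A⁻¹ * nradius A := by
    refine le_of_mul_le_mul_right ?_ hρ
    calc Real.cos α ^ 2 * (⟪x, T x⟫_ℂ).re ≤ nradius A⁻¹ * (Real.cos α ^ 2 * ‖T x‖ ^ 2) := by
          rw [mul_left_comm]; exact mul_le_mul_of_nonneg_left hA'x (sq_nonneg _)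
      _ ≤ nradius A⁻¹ * nradius A * (⟪x, T x⟫_ℂ).re := by
          rw [mul_assoc]; exact mul_le_mul_of_nonneg_left hAx (nradius_nonneg _)
  calc Real.cos α ^ 3 * (nradius A)⁻¹ ≤ Real.cos α ^ 2 * (nradius A)⁻¹ :=
        mul_le_mul_of_nonneg_right (pow_le_pow_of_le_one hcos.le (Real.cos_le_one α) (by norm_num))
          (inv_nonneg.mpr hw.le)
    _ ≤ nradius A⁻¹ := by rwa [← div_eq_mul_inv, div_le_iff₀ hw]
end

section
/- Let n ≥ 1, 0 ≤ α < π/2, let A ∈ Mₙ(ℂ) satisfy A ∈ S_α, and let ν be a probability measure on [0,1]. Then the matrix f(A) := ∫₀¹ ((1−s)I + sA⁻¹)⁻¹ dν(s) belongs to S_α. -/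
open Matrix MeasureTheory
open scoped ComplexOrder

attribute [local instance] Matrix.normedAddCommGroup Matrix.normedSpace

/-- `f(A) = ∫₀¹ ((1-s)I + sA⁻¹)⁻¹ dν(s)`, the operator monotone function associated
with the probability measure `ν` applied to the matrix `A`. -/
noncomputable def matFun {n : ℕ} (ν : Measure ℝ) (A : Matrix (Fin n) (Fin n) ℂ) :
    Matrix (Fin n) (Fin n) ℂ :=
  ∫ s in Set.Icc (0 : ℝ) 1, ((1 - s) • (1 : Matrix (Fin n) (Fin n) ℂ) + s • A⁻¹)⁻¹ ∂ν

/-! Write `q_M(x) = ⟪x, M x⟫`. Membership in `S_α` says that `q_M(x)` lies in the sector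
`{z : 0 < Re z, |Im z| ≤ tan α · Re z}` for every `x ≠ 0`; this sector is a convex cone, stable
under conjugation. Hence `S_α` is stable under inversion, because `q_{M⁻¹}(x) = conj q_M(M⁻¹ x)`,
and under convex combinations with `I`, because `q_I(x) = ‖x‖²` is a positive real. So every
integrand `((1 - s) I + s A⁻¹)⁻¹` lies in `S_α`, and since `x ↦ q(x)` commutes with the integral
and `ν` charges `[0, 1]`, the sector conditions pass to `f(A)`. -/

open scoped InnerProductSpace ComplexConjugate

def sector (t : ℝ) : Set ℂ := {z | 0 < z.re ∧ |z.im| ≤ t * z.re}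

lemma nonneg_of_mem_sector {t : ℝ} {z : ℂ} (hz : z ∈ sector t) : 0 ≤ t :=
  nonneg_of_mul_nonneg_left ((abs_nonneg _).trans hz.2) hz.1

lemma ofReal_mem_sector {t r : ℝ} (ht : 0 ≤ t) (hr : 0 < r) : (r : ℂ) ∈ sector t := by
  simp [sector, hr, mul_nonneg ht hr.le]

lemma conj_mem_sector {t : ℝ} {z : ℂ} (hz : z ∈ sector t) : conj z ∈ sector t := by
  simpa [sector] using hz

lemma ofReal_mul_mem_sector {t r : ℝ} {z : ℂ} (hr : 0 < r) (hz : z ∈ sector t) :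
    (r : ℂ) * z ∈ sector t := by
  refine ⟨by simpa using mul_pos hr hz.1, ?_⟩
  simp only [Complex.re_ofReal_mul, Complex.im_ofReal_mul, abs_mul, abs_of_pos hr]
  nlinarith [hz.2]

lemma convex_sector (t : ℝ) : Convex ℝ (sector t) := by
  intro z hz w hw a b ha hb hab
  simp only [sector, Set.mem_ofPred_eq, Complex.add_re, Complex.add_im, Complex.real_smul,
    Complex.re_ofReal_mul, Complex.im_ofReal_mul] at hz hw ⊢
  refine ⟨?_, ?_⟩
  · rcases ha.eq_or_lt with rfl | ha
    · simp_all
    · nlinarith [mul_nonneg hb hw.1.le]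
  · calc |a * z.im + b * w.im| ≤ a * |z.im| + b * |w.im| := by
          refine (abs_add_le _ _).trans ?_
          rw [abs_mul, abs_mul, abs_of_nonneg ha, abs_of_nonneg hb]
      _ ≤ a * (t * z.re) + b * (t * w.re) := by gcongr; exacts [hz.2, hw.2]
      _ = t * (a * z.re + b * w.re) := by ring

lemma integral_mem_sector {X : Type*} [MeasurableSpace X] {μ : Measure X}
    [NeZero μ] {t : ℝ} {F : X → ℂ} (hF : Integrable F μ) (hFt : ∀ᵐ x ∂μ, F x ∈ sector t) :
    ∫ x, F x ∂μ ∈ sector t := by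
  have hre : (∫ x, F x ∂μ).re = ∫ x, (F x).re ∂μ := (integral_re hF).symm
  have him : (∫ x, F x ∂μ).im = ∫ x, (F x).im ∂μ := (integral_im hF).symm
  refine ⟨?_, ?_⟩
  · rw [hre, integral_pos_iff_support_of_nonneg_ae (hFt.mono fun x hx => hx.1.le) hF.re]
    refine (NeZero.pos (μ Set.univ)).trans_le (measure_mono_ae ?_)
    filter_upwards [hFt] with x hx _ using hx.1.ne'
  · calc |(∫ x, F x ∂μ).im| ≤ ∫ x, |(F x).im| ∂μ := by
          rw [him]; exact abs_integral_le_integral_abs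
      _ ≤ ∫ x, t * (F x).re ∂μ :=
          integral_mono_ae hF.im.abs (hF.re.const_mul t) (hFt.mono fun x hx => hx.2)
      _ = t * (∫ x, F x ∂μ).re := by rw [integral_const_mul, hre]

lemma continuousOn_matrix_inv {X m 𝕜 : Type*} [TopologicalSpace X] [Fintype m] [DecidableEq m]
    [NormedField 𝕜] {G : X → Matrix m m 𝕜} (hG : Continuous G) {S : Set X}
    (hS : ∀ x ∈ S, IsUnit (G x).det) : ContinuousOn (fun x => (G x)⁻¹) S := fun x hx =>
  ((continuousAt_matrix_inv _ (by
    rw [Ring.inverse_eq_inv']; exact continuousAt_inv₀ (hS x hx).ne_zero)).comp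
    hG.continuousAt).continuousWithinAt

section

variable {n : ℕ}

noncomputable def quadForm (x : EuclideanSpace ℂ (Fin n)) : Matrix (Fin n) (Fin n) ℂ →L[ℂ] ℂ :=
  LinearMap.toContinuousLinearMap
    { toFun := fun M => ⟪x, toEuclideanCLM (𝕜 := ℂ) M x⟫_ℂ
      map_add' := fun M N => by simp only [map_add, _root_.add_apply, inner_add_right]
      map_smul' := fun c M => by
        simp only [_root_.map_smul, _root_.smul_apply, inner_smul_right,
          RingHom.id_apply, smul_eq_mul] }

@[simp]
lemma quadForm_apply (x : EuclideanSpace ℂ (Fin n)) (M : Matrix (Fin n) (Fin n) ℂ) :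
    quadForm x M = ⟪x, toEuclideanCLM (𝕜 := ℂ) M x⟫_ℂ := rfl

lemma quadForm_toLp (v : Fin n → ℂ) (M : Matrix (Fin n) (Fin n) ℂ) :
    quadForm (WithLp.toLp 2 v) M = star v ⬝ᵥ (M *ᵥ v) := by
  simp [EuclideanSpace.inner_toLp_toLp, dotProduct_comm]

lemma quadForm_one (x : EuclideanSpace ℂ (Fin n)) : quadForm x 1 = ((‖x‖ ^ 2 : ℝ) : ℂ) := by
  simp [inner_self_eq_norm_sq_to_K]

lemma quadForm_conjTranspose (x : EuclideanSpace ℂ (Fin n)) (M : Matrix (Fin n) (Fin n) ℂ) :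
    quadForm x Mᴴ = conj (quadForm x M) := by
  rw [quadForm_apply, quadForm_apply, ← star_eq_conjTranspose, map_star,
    ContinuousLinearMap.star_eq_adjoint, ContinuousLinearMap.adjoint_inner_right,
    inner_conj_symm]

lemma quadForm_matRe (x : EuclideanSpace ℂ (Fin n)) (M : Matrix (Fin n) (Fin n) ℂ) :
    quadForm x (matRe M) = ((quadForm x M).re : ℂ) := by
  rw [matRe, map_smul, map_add, quadForm_conjTranspose, Complex.add_conj, smul_eq_mul]
  push_cast
  ring

lemma quadForm_smul_left (c : ℂ) (x : EuclideanSpace ℂ (Fin n)) (M : Matrix (Fin n) (Fin n) ℂ) :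
    quadForm (c • x) M = (‖c‖ : ℂ) ^ 2 * quadForm x M := by
  rw [quadForm_apply, quadForm_apply, map_smul, inner_smul_left, inner_smul_right, ← mul_assoc,
    mul_comm (conj c), RCLike.mul_conj]
  rfl

lemma quadForm_inv {M : Matrix (Fin n) (Fin n) ℂ} (hM : IsUnit M.det)
    (x : EuclideanSpace ℂ (Fin n)) :
    quadForm x M⁻¹ = conj (quadForm (toEuclideanCLM (𝕜 := ℂ) M⁻¹ x) M) := by
  set y := toEuclideanCLM (𝕜 := ℂ) M⁻¹ x
  have hx : toEuclideanCLM (𝕜 := ℂ) M y = x := by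
    rw [← mul_apply_eq_comp, ← map_mul, mul_nonsing_inv _ hM, map_one, one_apply_eq_self]
  calc quadForm x M⁻¹ = ⟪toEuclideanCLM (𝕜 := ℂ) M y, y⟫_ℂ := by rw [hx]; rfl
    _ = _ := by rw [quadForm_apply, inner_conj_symm]

def IsSectorial (t : ℝ) (M : Matrix (Fin n) (Fin n) ℂ) : Prop :=
  ∀ x : EuclideanSpace ℂ (Fin n), x ≠ 0 → quadForm x M ∈ sector t

lemma isSectorial_iff_forall_norm_eq_one {t : ℝ} {M : Matrix (Fin n) (Fin n) ℂ} :
    IsSectorial t M ↔ ∀ x : EuclideanSpace ℂ (Fin n), ‖x‖ = 1 → quadForm x M ∈ sector t := by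
  refine ⟨fun h x hx => h x (norm_ne_zero_iff.1 (by simp [hx])), fun h x hx => ?_⟩
  have hx' : (‖x‖ : ℂ) ≠ 0 := by exact_mod_cast norm_ne_zero_iff.2 hx
  have hxu : x = (‖x‖ : ℂ) • ((‖x‖ : ℂ)⁻¹ • x) := by rw [smul_smul, mul_inv_cancel₀ hx', one_smul]
  have hu : ‖(‖x‖ : ℂ)⁻¹ • x‖ = 1 := by
    rw [norm_smul, norm_inv, Complex.norm_real, norm_norm, inv_mul_cancel₀ (by simpa using hx)]
  rw [hxu, quadForm_smul_left, Complex.norm_real, norm_norm]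
  exact_mod_cast ofReal_mul_mem_sector (pow_pos (norm_pos_iff.2 hx) 2) (h _ hu)

lemma isHermitian_matRe (M : Matrix (Fin n) (Fin n) ℂ) : (matRe M).IsHermitian := by
  rw [IsHermitian, matRe, conjTranspose_smul, conjTranspose_add, conjTranspose_conjTranspose,
    add_comm]
  norm_num

lemma posDef_matRe_iff {M : Matrix (Fin n) (Fin n) ℂ} :
    (matRe M).PosDef ↔ ∀ x : EuclideanSpace ℂ (Fin n), x ≠ 0 → 0 < (quadForm x M).re := by
  simp only [posDef_iff_dotProduct_mulVec, isHermitian_matRe, true_and, ← quadForm_toLp,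
    quadForm_matRe, Complex.zero_lt_real]
  exact (WithLp.linearEquiv 2 ℂ (Fin n → ℂ)).symm.forall_congr (by simp)

lemma inSector_iff_isSectorial {α : ℝ} {M : Matrix (Fin n) (Fin n) ℂ} :
    InSector α M ↔ IsSectorial (Real.tan α) M := by
  refine ⟨fun ⟨hpd, hsec⟩ => isSectorial_iff_forall_norm_eq_one.2 fun x hx => ?_, fun h => ?_⟩
  · exact ⟨posDef_matRe_iff.1 hpd x (norm_ne_zero_iff.1 (by simp [hx])), hsec x hx⟩
  · exact ⟨posDef_matRe_iff.2 fun x hx => (h x hx).1,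
      fun x hx => (isSectorial_iff_forall_norm_eq_one.1 h x hx).2⟩

lemma IsSectorial.isUnit_det {t : ℝ} {M : Matrix (Fin n) (Fin n) ℂ} (h : IsSectorial t M) :
    IsUnit M.det := by
  refine isUnit_iff_ne_zero.2 fun hdet => ?_
  obtain ⟨v, hv, hMv⟩ := exists_mulVec_eq_zero_iff.2 hdet
  have := (h (WithLp.toLp 2 v) (by simpa using hv)).1
  simp [hMv] at this

lemma IsSectorial.inv {t : ℝ} {M : Matrix (Fin n) (Fin n) ℂ} (h : IsSectorial t M) :
    IsSectorial t M⁻¹ := by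
  intro x hx
  rw [quadForm_inv h.isUnit_det]
  refine conj_mem_sector (h _ fun hy => hx ?_)
  rw [← map_zero (toEuclideanCLM (𝕜 := ℂ) M), ← hy, ← mul_apply_eq_comp, ← map_mul,
    mul_nonsing_inv _ h.isUnit_det, map_one, one_apply_eq_self]

lemma IsSectorial.one_sub_smul_one_add_smul {t s : ℝ} {M : Matrix (Fin n) (Fin n) ℂ}
    (h : IsSectorial t M) (hs0 : 0 ≤ s) (hs1 : s ≤ 1) :
    IsSectorial t ((1 - s) • (1 : Matrix (Fin n) (Fin n) ℂ) + s • M) := by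
  intro x hx
  rw [map_add, ContinuousLinearMap.map_smul_of_tower, ContinuousLinearMap.map_smul_of_tower,
    quadForm_one]
  exact convex_sector t (ofReal_mem_sector (nonneg_of_mem_sector (h x hx))
    (pow_pos (norm_pos_iff.2 hx) 2)) (h x hx) (sub_nonneg.2 hs1) hs0 (sub_add_cancel 1 s)

lemma IsSectorial.matFun {t : ℝ} {A : Matrix (Fin n) (Fin n) ℂ} (hA : IsSectorial t A)
    (ν : Measure ℝ) [IsFiniteMeasure ν] (hν : ν (Set.Icc 0 1) ≠ 0) :
    IsSectorial t (matFun ν A) := by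
  have hcomb : ∀ s ∈ Set.Icc (0 : ℝ) 1,
      IsSectorial t ((1 - s) • (1 : Matrix (Fin n) (Fin n) ℂ) + s • A⁻¹) :=
    fun s hs => hA.inv.one_sub_smul_one_add_smul hs.1 hs.2
  -- The topology of the matrix norm is the product topology only up to unfolding, which
  -- instance search does not do.
  let _ : ContinuousENorm (Matrix (Fin n) (Fin n) ℂ) := SeminormedAddGroup.toContinuousENorm
  have hint : IntegrableOn (fun s : ℝ => ((1 - s) • (1 : Matrix (Fin n) (Fin n) ℂ) + s • A⁻¹)⁻¹)
      (Set.Icc 0 1) ν :=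
    (continuousOn_matrix_inv (by fun_prop) fun s hs => (hcomb s hs).isUnit_det
      ).integrableOn_compact isCompact_Icc
  have : NeZero (ν.restrict (Set.Icc 0 1)) := ⟨by simpa using hν⟩
  intro x hx
  have hcomm : quadForm x (_root_.matFun ν A) = ∫ s in Set.Icc 0 1,
      quadForm x ((1 - s) • (1 : Matrix (Fin n) (Fin n) ℂ) + s • A⁻¹)⁻¹ ∂ν :=
    ((quadForm x).integral_comp_comm hint).symm
  rw [hcomm]
  exact integral_mem_sector ((quadForm x).integrable_comp hint)
    (ae_restrict_of_forall_mem measurableSet_Icc fun s hs => (hcomb s hs).inv x hx)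

end

theorem stmt7_general {n : ℕ} {α : ℝ} {A : Matrix (Fin n) (Fin n) ℂ} (hA : InSector α A)
    (ν : Measure ℝ) [IsProbabilityMeasure ν] (hν : ν (Set.Icc (0 : ℝ) 1)ᶜ = 0) :
    InSector α (matFun ν A) := by
  have hIcc : ν (Set.Icc 0 1) ≠ 0 := by
    simp [(prob_compl_eq_zero_iff measurableSet_Icc).1 hν]
  exact inSector_iff_isSectorial.2 ((inSector_iff_isSectorial.1 hA).matFun ν hIcc)

theorem stmt7 {n : ℕ} (hn : 1 ≤ n) {α : ℝ} (hα0 : 0 ≤ α) (hα : α < Real.pi / 2)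
    {A : Matrix (Fin n) (Fin n) ℂ} (hA : InSector α A)
    (ν : Measure ℝ) [IsProbabilityMeasure ν] (hν : ν (Set.Icc (0 : ℝ) 1)ᶜ = 0) :
    InSector α (matFun ν A) :=
  stmt7_general hA ν hν
end
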